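/- arXiv:2603.23545 — 2 statements merged into one kernel-verified Lean document; each statement's English description precedes it below -/
import Mathlib

section
/- For any 2×2 complex matrix A, the quantity U_A = (tr(A*A))/2 - |tr A|²/4 satisfies U_A ≥ |D_A|, where D_A = det(A) - (tr A)²/4. Moreover, equality U_A = |D_A| holds if and only if A is normal. -/
/-!
A direct computation gives the identity `8 (U_A² - |D_A|²) = ‖A*A - AA*‖²` (Frobenius norm).
Since `U_A ≥ 0`, this yields `U_A ≥ |D_A|`, with equality exactly when the self-commutator
`A*A - AA*` vanishes.
-/

open Matrix

noncomputable def UA (A : Matrix (Fin 2) (Fin 2) ℂ) : ℝ :=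
  (Matrix.trace (Aᴴ * A)).re / 2 - ‖Matrix.trace A‖ ^ 2 / 4

noncomputable def DA (A : Matrix (Fin 2) (Fin 2) ℂ) : ℂ :=
  A.det - (Matrix.trace A) ^ 2 / 4

open Complex

lemma Matrix.sum_sq_norm_entries_eq_zero_iff {m n 𝕜 : Type*} [Fintype m] [Fintype n]
    [NormedAddCommGroup 𝕜] (M : Matrix m n 𝕜) : ∑ i, ∑ j, ‖M i j‖ ^ 2 = 0 ↔ M = 0 := by
  have hrow (i : m) : 0 ≤ ∑ j, ‖M i j‖ ^ 2 := by positivity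
  simp [Finset.sum_eq_zero_iff_of_nonneg, hrow, ← Matrix.ext_iff]

lemma UA_eq_sq_norm_entries (A : Matrix (Fin 2) (Fin 2) ℂ) :
    UA A = ‖A 0 0 - A 1 1‖ ^ 2 / 4 + (‖A 0 1‖ ^ 2 + ‖A 1 0‖ ^ 2) / 2 := by
  simp only [UA, trace_fin_two, mul_apply, Fin.sum_univ_two, conjTranspose_apply, Complex.sq_norm,
    add_re, add_im, normSq_apply, mul_re, sub_re, sub_im, star_def, conj_re, conj_im]
  ring

lemma UA_nonneg (A : Matrix (Fin 2) (Fin 2) ℂ) : 0 ≤ UA A := by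
  rw [UA_eq_sq_norm_entries]
  positivity

-- Checked in `ℂ`, where `‖z‖ ^ 2 = z * conj z` turns it into a polynomial identity in the
-- entries and their conjugates.
lemma eight_mul_sq_UA_sub_sq_norm_DA (A : Matrix (Fin 2) (Fin 2) ℂ) :
    8 * (UA A ^ 2 - ‖DA A‖ ^ 2) = ∑ i, ∑ j, ‖(Aᴴ * A - A * Aᴴ) i j‖ ^ 2 := by
  rw [UA_eq_sq_norm_entries]
  simp only [DA, det_fin_two, trace_fin_two, Fin.sum_univ_two, Matrix.sub_apply, mul_apply,
    conjTranspose_apply, star_def]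
  apply Complex.ofReal_injective
  push_cast
  simp only [← Complex.mul_conj', map_sub, map_add, map_mul, map_div₀, map_pow, map_ofNat,
    Complex.conj_conj]
  ring

theorem UA_ge_abs_DA_and_eq_iff_normal (A : Matrix (Fin 2) (Fin 2) ℂ) :
    UA A ≥ ‖DA A‖ ∧
      (UA A = ‖DA A‖ ↔ Aᴴ * A = A * Aᴴ) := by
  have hgap := eight_mul_sq_UA_sub_sq_norm_DA A
  have hsq : ‖DA A‖ ^ 2 ≤ UA A ^ 2 := by
    have : 0 ≤ ∑ i, ∑ j, ‖(Aᴴ * A - A * Aᴴ) i j‖ ^ 2 := by positivity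
    linarith
  refine ⟨(pow_le_pow_iff_left₀ (norm_nonneg _) (UA_nonneg A) two_ne_zero).mp hsq, ?_⟩
  rw [← sq_eq_sq₀ (UA_nonneg A) (norm_nonneg _), ← sub_eq_zero (a := Aᴴ * A),
    ← Matrix.sum_sq_norm_entries_eq_zero_iff, ← hgap]
  constructor <;> intro h <;> linarith
end

section
/- If f₁, f₂, m⁺ ≥ 0 with |f₁ - f₂| < m⁺, then the inequality f₁ + f₂ ≤ m⁺ is equivalent to 1 - (cosh f₁)² - (cosh f₂)² - (cosh m⁺)² + 2(cosh f₁)(cosh f₂)(cosh m⁺) ≤ 0, with equality holding in one exactly when it holds in the other. -/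
theorem ellipse_inequality_cosh_equiv (f₁ f₂ m : ℝ)
    (hf₁ : 0 ≤ f₁) (hf₂ : 0 ≤ f₂) (hm : 0 ≤ m) (h : |f₁ - f₂| < m) :
    (f₁ + f₂ ≤ m ↔
      1 - (Real.cosh f₁) ^ 2 - (Real.cosh f₂) ^ 2 - (Real.cosh m) ^ 2
        + 2 * (Real.cosh f₁) * (Real.cosh f₂) * (Real.cosh m) ≤ 0) ∧
    (f₁ + f₂ = m ↔
      1 - (Real.cosh f₁) ^ 2 - (Real.cosh f₂) ^ 2 - (Real.cosh m) ^ 2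
        + 2 * (Real.cosh f₁) * (Real.cosh f₂) * (Real.cosh m) = 0) := by
  have key : 1 - (Real.cosh f₁) ^ 2 - (Real.cosh f₂) ^ 2 - (Real.cosh m) ^ 2
        + 2 * (Real.cosh f₁) * (Real.cosh f₂) * (Real.cosh m)
      = -(Real.cosh m - Real.cosh (f₁ + f₂)) * (Real.cosh m - Real.cosh (f₁ - f₂)) := by
    rw [Real.cosh_add, Real.cosh_sub]
    have h1 := Real.sinh_sq f₁
    have h2 := Real.sinh_sq f₂
    ring_nf
    nlinarith [h1, h2]
  have hQ : Real.cosh (f₁ - f₂) < Real.cosh m := by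
    rw [Real.cosh_lt_cosh]
    rwa [abs_of_nonneg hm]
  have hQpos : 0 < Real.cosh m - Real.cosh (f₁ - f₂) := by linarith
  have habs : |f₁ + f₂| = f₁ + f₂ := abs_of_nonneg (by linarith)
  have hle : f₁ + f₂ ≤ m ↔ Real.cosh (f₁ + f₂) ≤ Real.cosh m := by
    rw [Real.cosh_le_cosh, habs, abs_of_nonneg hm]
  have heq : f₁ + f₂ = m ↔ Real.cosh (f₁ + f₂) = Real.cosh m := by
    constructor
    · rintro rfl; rfl
    · intro hc
      rcases lt_trichotomy (f₁ + f₂) m with hlt | he | hgt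
      · exfalso
        have := (Real.cosh_lt_cosh (x := f₁ + f₂) (y := m)).2
          (by rw [habs, abs_of_nonneg hm]; exact hlt)
        linarith
      · exact he
      · exfalso
        have := (Real.cosh_lt_cosh (x := m) (y := f₁ + f₂)).2
          (by rw [habs, abs_of_nonneg hm]; exact hgt)
        linarith
  rw [key, hle, heq]
  constructor
  · constructor
    · intro hc; nlinarith
    · intro hc; nlinarith
  · constructor
    · intro hc; nlinarith
    · intro hc; nlinarith
end
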